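/- arXiv:2005.04548 — 7 statements merged into one kernel-verified Lean document; each statement's English description precedes it below -/
import Mathlib

section
/- Let V be a nontrivial finite-dimensional complex inner product space, let H₀ and W be self-adjoint linear operators on V, let ΔE > 0 and 0 ≤ b < 1/2. Assume: (i) Φ₀ is a unit vector with H₀Φ₀ = 0; (ii) every vector Ψ orthogonal to Φ₀ satisfies ⟨Ψ, H₀Ψ⟩ ≥ ΔE·‖Ψ‖² (so the kernel of H₀ is the line ℂΦ₀ and H₀ has spectral gap ΔE above its ground state); (iii) WΦ₀ = 0; (iv) ‖WΨ‖ ≤ b·‖H₀Ψ‖ for every Ψ ∈ V. Then the kernel of H := H₀ + W is exactly the one-dimensional subspace ℂΦ₀; in particular 0 is an eigenvalue of H with nondegenerate eigenvector Φ₀. -/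
/-!
If `(H₀ + W) Ψ = 0` then `‖H₀ Ψ‖ = ‖W Ψ‖ ≤ b ‖H₀ Ψ‖`, so `H₀ Ψ = 0` because `b < 1`.
Removing from `Ψ` its component along `Φ₀` keeps it in `ker H₀` and makes it orthogonal to `Φ₀`,
where the spectral gap forces it to vanish.
-/

open Submodule

theorem LinearMap.ker_add_le_ker_of_norm_le_mul {R E F : Type*} [Semiring R] [AddCommMonoid E]
    [Module R E] [NormedAddCommGroup F] [Module R F] (A B : E →ₗ[R] F) {b : ℝ} (hb : b < 1)
    (hBA : ∀ x, ‖B x‖ ≤ b * ‖A x‖) :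
    LinearMap.ker (A + B) ≤ LinearMap.ker A := by
  intro x hx
  have hAB : A x = -B x := eq_neg_of_add_eq_zero_left hx
  have hle : ‖A x‖ ≤ b * ‖A x‖ := by simpa only [hAB, norm_neg] using hBA x
  have : ‖A x‖ = 0 := by nlinarith [norm_nonneg (A x)]
  exact norm_eq_zero.1 this

theorem LinearMap.ker_le_of_le_ker_of_coercive_on_orthogonal {𝕜 E : Type*} [RCLike 𝕜]
    [NormedAddCommGroup E] [InnerProductSpace 𝕜 E] (A : E →ₗ[𝕜] E) (K : Submodule 𝕜 E)
    [K.HasOrthogonalProjection] (hK : K ≤ LinearMap.ker A) {c : ℝ} (hc : 0 < c)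
    (hcoer : ∀ y ∈ Kᗮ, c * ‖y‖ ^ 2 ≤ RCLike.re (inner 𝕜 y (A y))) :
    LinearMap.ker A ≤ K := by
  intro x hx
  set y := x - K.starProjection x
  have hAy : A y = 0 := by
    simp only [y, map_sub, LinearMap.mem_ker.1 hx,
      LinearMap.mem_ker.1 (hK (K.starProjection_apply_mem x)), sub_zero]
  have hy : y = 0 := by
    have h := hcoer y (K.sub_starProjection_mem_orthogonal x)
    rw [hAy, inner_zero_right, map_zero] at h
    have : ‖y‖ ^ 2 = 0 := le_antisymm (nonpos_of_mul_nonpos_right h hc) (sq_nonneg _)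
    exact norm_eq_zero.1 (pow_eq_zero_iff two_ne_zero |>.1 this)
  rw [sub_eq_zero.1 hy]
  exact K.starProjection_apply_mem x

theorem stability_ground_state_unique_general
    {V : Type*} [NormedAddCommGroup V] [InnerProductSpace ℂ V]
    (H₀ W : V →ₗ[ℂ] V)
    (ΔE b : ℝ) (hΔE : 0 < ΔE) (hb : b < 1 / 2)
    (Φ₀ : V) (hH₀Φ₀ : H₀ Φ₀ = 0)
    (hgap : ∀ Ψ : V, (inner ℂ Φ₀ Ψ : ℂ) = 0 → ΔE * ‖Ψ‖ ^ 2 ≤ (inner ℂ Ψ (H₀ Ψ) : ℂ).re)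
    (hWΦ₀ : W Φ₀ = 0)
    (hrel : ∀ Ψ : V, ‖W Ψ‖ ≤ b * ‖H₀ Ψ‖) :
    LinearMap.ker (H₀ + W) = Submodule.span ℂ {Φ₀} := by
  have hker : ℂ ∙ Φ₀ ≤ LinearMap.ker H₀ := (span_singleton_le_iff_mem _ _).2 hH₀Φ₀
  refine le_antisymm ?_ ((span_singleton_le_iff_mem _ _).2 (by simp [hH₀Φ₀, hWΦ₀]))
  calc LinearMap.ker (H₀ + W) ≤ LinearMap.ker H₀ :=
        H₀.ker_add_le_ker_of_norm_le_mul W (by linarith) hrel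
    _ ≤ ℂ ∙ Φ₀ := H₀.ker_le_of_le_ker_of_coercive_on_orthogonal _ hker hΔE fun Ψ hΨ =>
        hgap Ψ (mem_orthogonal_singleton_iff_inner_right.1 hΨ)

/-- Uniqueness part of Proposition 5.1 (relatively bounded perturbations):
under the relative bound `‖WΨ‖ ≤ b‖H₀Ψ‖` with `0 ≤ b < 1/2`, the kernel of `H₀ + W` is
exactly the line `ℂ Φ₀` spanned by the ground state `Φ₀` of `H₀`. -/
theorem stability_ground_state_unique
    {V : Type*} [NormedAddCommGroup V] [InnerProductSpace ℂ V]
    [FiniteDimensional ℂ V] [Nontrivial V]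
    (H₀ W : V →ₗ[ℂ] V) (hH₀sa : H₀.IsSymmetric) (hWsa : W.IsSymmetric)
    (ΔE b : ℝ) (hΔE : 0 < ΔE) (hb₀ : 0 ≤ b) (hb : b < 1 / 2)
    (Φ₀ : V) (hΦ₀norm : ‖Φ₀‖ = 1) (hH₀Φ₀ : H₀ Φ₀ = 0)
    (hgap : ∀ Ψ : V, (inner ℂ Φ₀ Ψ : ℂ) = 0 → ΔE * ‖Ψ‖ ^ 2 ≤ (inner ℂ Ψ (H₀ Ψ) : ℂ).re)
    (hWΦ₀ : W Φ₀ = 0)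
    (hrel : ∀ Ψ : V, ‖W Ψ‖ ≤ b * ‖H₀ Ψ‖) :
    LinearMap.ker (H₀ + W) = Submodule.span ℂ {Φ₀} :=
  stability_ground_state_unique_general H₀ W ΔE b hΔE hb Φ₀ hH₀Φ₀ hgap hWΦ₀ hrel
end

section
/- Let V be a nontrivial finite-dimensional complex inner product space, let H₀ and W be self-adjoint linear operators on V, let ΔE > 0 and b ≥ 0 with b/√(1−2b) ≤ 1/2 (in particular b < 1/2). Assume: (i) Φ₀ is a unit vector with H₀Φ₀ = 0; (ii) every vector Ψ orthogonal to Φ₀ satisfies ⟨Ψ, H₀Ψ⟩ ≥ ΔE·‖Ψ‖²; (iii) WΦ₀ = 0; (iv) ‖WΨ‖ ≤ b·‖H₀Ψ‖ for every Ψ ∈ V. Then every nonzero eigenvalue E of H := H₀ + W satisfies E ≥ (1 − b/√(1−2b))·ΔE. In other words, the spectral gap of H above the ground-state eigenvalue 0 is at least (1 − b/√(1−2b))·ΔE. -/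
/-!
An eigenvector `Ψ` of `H = H₀ + W` with eigenvalue `E ≠ 0` is orthogonal to the common kernel
vector `Φ₀`, so the gap of `H₀` applies to it: `ΔE ‖Ψ‖² ≤ ⟪Ψ, H₀Ψ⟫ = E ‖Ψ‖² - ⟪Ψ, WΨ⟫`.
The relative bound controls the perturbation twice: `|⟪Ψ, WΨ⟫| ≤ b ‖Ψ‖ ‖H₀Ψ‖`, and
`(1 - b) ‖H₀Ψ‖ ≤ ‖HΨ‖ = |E| ‖Ψ‖`. Hence `ΔE ≤ E + c |E|` with `c = b / (1 - b) < 1`, which rules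
out `E < 0` and gives `(1 - c) ΔE ≤ (1 - c²) E ≤ E` otherwise. Finally `√(1 - 2b) ≤ 1 - b`, so
`c ≤ b / √(1 - 2b)`.
-/

open scoped InnerProductSpace

theorem sub_mul_norm_le_norm_add {G : Type*} [SeminormedAddCommGroup G] {x y : G} {b : ℝ}
    (h : ‖y‖ ≤ b * ‖x‖) : (1 - b) * ‖x‖ ≤ ‖x + y‖ := by
  have := norm_sub_norm_le x (-y)
  rw [norm_neg, sub_neg_eq_add] at this
  linarith

theorem sub_mul_le_of_le_add_mul_abs {ΔE E c : ℝ} (hΔE : 0 < ΔE) (hc : c < 1)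
    (h : ΔE ≤ E + c * |E|) : (1 - c) * ΔE ≤ E := by
  rcases le_or_gt 0 E with hE | hE
  · rw [abs_of_nonneg hE] at h
    nlinarith [mul_le_mul_of_nonneg_left h (sub_nonneg.2 hc.le), sq_nonneg c]
  · rw [abs_of_neg hE] at h
    nlinarith

theorem div_one_sub_le_div_sqrt_one_sub_two_mul {b : ℝ} (hb₀ : 0 ≤ b) (hb : b < 1 / 2) :
    b / (1 - b) ≤ b / √(1 - 2 * b) := by
  refine div_le_div_of_nonneg_left hb₀ (Real.sqrt_pos.2 (by linarith)) ?_
  rw [Real.sqrt_le_left (by linarith)]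
  nlinarith [sq_nonneg b]

namespace LinearMap

variable {𝕜 V : Type*} [RCLike 𝕜] [NormedAddCommGroup V] [InnerProductSpace 𝕜 V]

theorem IsSymmetric.inner_eq_zero_of_apply_eq_zero_of_apply_eq_smul {T : V →ₗ[𝕜] V}
    (hT : T.IsSymmetric) {φ ψ : V} {μ : 𝕜} (hφ : T φ = 0) (hψ : T ψ = μ • ψ) (hμ : μ ≠ 0) :
    ⟪φ, ψ⟫_𝕜 = 0 := by
  have : μ * ⟪φ, ψ⟫_𝕜 = 0 := by
    rw [← inner_smul_right, ← hψ, ← hT, hφ, inner_zero_left]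
  exact (mul_eq_zero.1 this).resolve_left hμ

theorem re_inner_apply_eq_of_apply_eq_smul {T : V →ₗ[𝕜] V} {ψ : V} {E : ℝ}
    (hψ : T ψ = (E : 𝕜) • ψ) : RCLike.re ⟪ψ, T ψ⟫_𝕜 = E * ‖ψ‖ ^ 2 := by
  rw [hψ, inner_smul_right, inner_self_eq_norm_sq_to_K, ← RCLike.ofReal_pow, ← RCLike.ofReal_mul,
    RCLike.ofReal_re]

theorem le_add_div_mul_abs_of_apply_eq_smul {A B : V →ₗ[𝕜] V} {ψ : V} {E ΔE b : ℝ}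
    (hψ : ψ ≠ 0) (hAB : (A + B) ψ = (E : 𝕜) • ψ)
    (hgap : ΔE * ‖ψ‖ ^ 2 ≤ RCLike.re ⟪ψ, A ψ⟫_𝕜) (hrel : ‖B ψ‖ ≤ b * ‖A ψ‖)
    (hb₀ : 0 ≤ b) (hb : b < 1) :
    ΔE ≤ E + b / (1 - b) * |E| := by
  have hnorm : (1 - b) * ‖A ψ‖ ≤ |E| * ‖ψ‖ := by
    have := sub_mul_norm_le_norm_add hrel
    rwa [← add_apply, hAB, norm_smul, RCLike.norm_ofReal] at this
  have hcross : -RCLike.re ⟪ψ, B ψ⟫_𝕜 ≤ ‖ψ‖ * (b * ‖A ψ‖) :=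
    calc -RCLike.re ⟪ψ, B ψ⟫_𝕜 ≤ ‖⟪ψ, B ψ⟫_𝕜‖ := (neg_le_abs _).trans (RCLike.abs_re_le_norm _)
      _ ≤ ‖ψ‖ * ‖B ψ‖ := norm_inner_le_norm _ _
      _ ≤ ‖ψ‖ * (b * ‖A ψ‖) := by gcongr
  have hbA : b * ‖A ψ‖ ≤ b / (1 - b) * (|E| * ‖ψ‖) := by
    rw [div_mul_eq_mul_div, le_div_iff₀ (by linarith)]
    nlinarith
  have henergy := re_inner_apply_eq_of_apply_eq_smul hAB
  rw [add_apply, inner_add_right, map_add] at henergy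
  have hψpos : 0 < ‖ψ‖ ^ 2 := by positivity
  refine le_of_mul_le_mul_right ?_ hψpos
  nlinarith [mul_le_mul_of_nonneg_left hbA (norm_nonneg ψ)]

end LinearMap

theorem stability_spectral_gap_general
    {V : Type*} [NormedAddCommGroup V] [InnerProductSpace ℂ V]
    (H₀ W : V →ₗ[ℂ] V) (hH₀sa : H₀.IsSymmetric) (hWsa : W.IsSymmetric)
    (ΔE b : ℝ) (hΔE : 0 < ΔE) (hb₀ : 0 ≤ b)
    (hb' : b < 1 / 2)
    (Φ₀ : V) (hH₀Φ₀ : H₀ Φ₀ = 0)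
    (hgap : ∀ Ψ : V, (inner ℂ Φ₀ Ψ : ℂ) = 0 → ΔE * ‖Ψ‖ ^ 2 ≤ (inner ℂ Ψ (H₀ Ψ) : ℂ).re)
    (hWΦ₀ : W Φ₀ = 0)
    (hrel : ∀ Ψ : V, ‖W Ψ‖ ≤ b * ‖H₀ Ψ‖) :
    ∀ E : ℝ, Module.End.HasEigenvalue (H₀ + W) (E : ℂ) → E ≠ 0 →
      (1 - b / Real.sqrt (1 - 2 * b)) * ΔE ≤ E := by
  intro E hE hE0
  obtain ⟨Ψ, hΨ⟩ := hE.exists_hasEigenvector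
  have horth : ⟪Φ₀, Ψ⟫_ℂ = 0 :=
    (hH₀sa.add hWsa).inner_eq_zero_of_apply_eq_zero_of_apply_eq_smul
      (by simp [hH₀Φ₀, hWΦ₀]) hΨ.apply_eq_smul (by exact_mod_cast hE0)
  have hperturbed : ΔE ≤ E + b / (1 - b) * |E| :=
    LinearMap.le_add_div_mul_abs_of_apply_eq_smul hΨ.2 hΨ.apply_eq_smul (hgap Ψ horth) (hrel Ψ)
      hb₀ (by linarith)
  calc (1 - b / √(1 - 2 * b)) * ΔE ≤ (1 - b / (1 - b)) * ΔE :=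
        mul_le_mul_of_nonneg_right
          (sub_le_sub_left (div_one_sub_le_div_sqrt_one_sub_two_mul hb₀ hb') 1) hΔE.le
    _ ≤ E := sub_mul_le_of_le_add_mul_abs hΔE ((div_lt_one (by linarith)).2 (by linarith))
        hperturbed

/-- Gap estimate of Proposition 5.1 (relatively bounded perturbations):
every nonzero eigenvalue `E` of `H = H₀ + W` satisfies
`E ≥ (1 − b/√(1−2b))·ΔE`. -/
theorem stability_spectral_gap
    {V : Type*} [NormedAddCommGroup V] [InnerProductSpace ℂ V]
    [FiniteDimensional ℂ V] [Nontrivial V]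
    (H₀ W : V →ₗ[ℂ] V) (hH₀sa : H₀.IsSymmetric) (hWsa : W.IsSymmetric)
    (ΔE b : ℝ) (hΔE : 0 < ΔE) (hb₀ : 0 ≤ b)
    (hb : b / Real.sqrt (1 - 2 * b) ≤ 1 / 2) (hb' : b < 1 / 2)
    (Φ₀ : V) (hΦ₀norm : ‖Φ₀‖ = 1) (hH₀Φ₀ : H₀ Φ₀ = 0)
    (hgap : ∀ Ψ : V, (inner ℂ Φ₀ Ψ : ℂ) = 0 → ΔE * ‖Ψ‖ ^ 2 ≤ (inner ℂ Ψ (H₀ Ψ) : ℂ).re)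
    (hWΦ₀ : W Φ₀ = 0)
    (hrel : ∀ Ψ : V, ‖W Ψ‖ ≤ b * ‖H₀ Ψ‖) :
    ∀ E : ℝ, Module.End.HasEigenvalue (H₀ + W) (E : ℂ) → E ≠ 0 →
      (1 - b / Real.sqrt (1 - 2 * b)) * ΔE ≤ E :=
  stability_spectral_gap_general H₀ W hH₀sa hWsa ΔE b hΔE hb₀ hb' Φ₀ hH₀Φ₀ hgap hWΦ₀ hrel
end

section
/- Let H₀ and W be bounded self-adjoint operators on a complex Hilbert space and let 0 ≤ b < 1/2 be such that ‖WΨ‖ ≤ b·‖H₀Ψ‖ for every Ψ. Suppose Ψ₁ is a unit vector with (H₀ + W)Ψ₁ = E₁·Ψ₁ for some real number E₁. Then ‖H₀Ψ₁‖² ≤ E₁²/(1−2b), and consequently ‖E₁·Ψ₁ − H₀Ψ₁‖² ≤ (b²/(1−2b))·E₁². -/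
/-!
The eigenvalue equation reads `H₀Ψ₁ + WΨ₁ = E₁Ψ₁`, so the triangle inequality and the relative
bound give `(1 - b)‖H₀Ψ₁‖ ≤ |E₁|`; as `(1 - b)² ≥ 1 - 2b > 0` this is the first estimate.
The second follows from `E₁Ψ₁ - H₀Ψ₁ = WΨ₁` and `‖WΨ₁‖ ≤ b‖H₀Ψ₁‖`.
-/

theorem one_sub_mul_norm_le_of_add_eq {E : Type*} [SeminormedAddCommGroup E] {u v w : E} {b : ℝ}
    (h : u + v = w) (hv : ‖v‖ ≤ b * ‖u‖) : (1 - b) * ‖u‖ ≤ ‖w‖ := by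
  have hu : ‖u‖ ≤ ‖w‖ + ‖v‖ := by
    rw [eq_sub_of_add_eq h]
    exact norm_sub_le w v
  linarith

theorem sq_le_div_one_sub_two_mul_of_one_sub_mul_le {x e b : ℝ} (hx : 0 ≤ x) (hb : b < 1 / 2)
    (h : (1 - b) * x ≤ |e|) : x ^ 2 ≤ e ^ 2 / (1 - 2 * b) := by
  rw [le_div_iff₀ (by linarith)]
  calc x ^ 2 * (1 - 2 * b) ≤ ((1 - b) * x) ^ 2 := by nlinarith [sq_nonneg (b * x)]
    _ ≤ |e| ^ 2 := pow_le_pow_left₀ (by nlinarith) h 2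
    _ = e ^ 2 := sq_abs e

theorem eigenvector_relative_bound_estimate_general
    {H : Type*} [NormedAddCommGroup H] [InnerProductSpace ℂ H]
    (H₀ W : H →L[ℂ] H)
    (b : ℝ) (hb : b < 1 / 2)
    (hrel : ∀ Ψ : H, ‖W Ψ‖ ≤ b * ‖H₀ Ψ‖)
    (Ψ₁ : H) (hΨ₁ : ‖Ψ₁‖ = 1) (E₁ : ℝ)
    (heig : (H₀ + W) Ψ₁ = (E₁ : ℂ) • Ψ₁) :
    ‖H₀ Ψ₁‖ ^ 2 ≤ E₁ ^ 2 / (1 - 2 * b) ∧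
      ‖(E₁ : ℂ) • Ψ₁ - H₀ Ψ₁‖ ^ 2 ≤ b ^ 2 / (1 - 2 * b) * E₁ ^ 2 := by
  have hsum : H₀ Ψ₁ + W Ψ₁ = (E₁ : ℂ) • Ψ₁ := heig
  have hE : ‖(E₁ : ℂ) • Ψ₁‖ = |E₁| := by
    rw [norm_smul, Complex.norm_real, Real.norm_eq_abs, hΨ₁, mul_one]
  have hH₀ : ‖H₀ Ψ₁‖ ^ 2 ≤ E₁ ^ 2 / (1 - 2 * b) :=
    sq_le_div_one_sub_two_mul_of_one_sub_mul_le (norm_nonneg _) hb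
      (hE ▸ one_sub_mul_norm_le_of_add_eq hsum (hrel Ψ₁))
  refine ⟨hH₀, ?_⟩
  rw [← eq_sub_of_add_eq' hsum]
  calc ‖W Ψ₁‖ ^ 2 ≤ (b * ‖H₀ Ψ₁‖) ^ 2 := pow_le_pow_left₀ (norm_nonneg _) (hrel Ψ₁) 2
    _ = b ^ 2 * ‖H₀ Ψ₁‖ ^ 2 := mul_pow _ _ _
    _ ≤ b ^ 2 * (E₁ ^ 2 / (1 - 2 * b)) := by gcongr
    _ = b ^ 2 / (1 - 2 * b) * E₁ ^ 2 := by ring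

/-- Key eigenvector estimate in the proof of Proposition 5.1:
if `(H₀ + W)Ψ₁ = E₁ Ψ₁` with `Ψ₁` a unit vector and `‖WΨ‖ ≤ b‖H₀Ψ‖` for all `Ψ`
with `0 ≤ b < 1/2`, then `‖H₀Ψ₁‖² ≤ E₁²/(1−2b)` and
`‖E₁Ψ₁ − H₀Ψ₁‖² ≤ (b²/(1−2b))E₁²`. -/
theorem eigenvector_relative_bound_estimate
    {H : Type*} [NormedAddCommGroup H] [InnerProductSpace ℂ H] [CompleteSpace H]
    (H₀ W : H →L[ℂ] H) (hH₀sa : IsSelfAdjoint H₀) (hWsa : IsSelfAdjoint W)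
    (b : ℝ) (hb₀ : 0 ≤ b) (hb : b < 1 / 2)
    (hrel : ∀ Ψ : H, ‖W Ψ‖ ≤ b * ‖H₀ Ψ‖)
    (Ψ₁ : H) (hΨ₁ : ‖Ψ₁‖ = 1) (E₁ : ℝ)
    (heig : (H₀ + W) Ψ₁ = (E₁ : ℂ) • Ψ₁) :
    ‖H₀ Ψ₁‖ ^ 2 ≤ E₁ ^ 2 / (1 - 2 * b) ∧
      ‖(E₁ : ℂ) • Ψ₁ - H₀ Ψ₁‖ ^ 2 ≤ b ^ 2 / (1 - 2 * b) * E₁ ^ 2 :=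
  eigenvector_relative_bound_estimate_general H₀ W b hb hrel Ψ₁ hΨ₁ E₁ heig
end

section
/- Let H be a complex Hilbert space, Λ a finite set, and (q_x)_{x∈Λ} a family of pairwise commuting orthogonal projections (bounded self-adjoint idempotent operators) on H. Let 𝒳 be a finite collection of nonempty subsets of Λ, and for each X ∈ 𝒳 let W_X be a bounded self-adjoint operator on H such that: (i) W_X commutes with q_y for every y ∉ X; (ii) W_X·P_X = 0 and P_X·W_X = 0, where P_X := ∏_{x∈X}(1 − q_x) (the factors commute, so the product is order-independent). Let g ≥ 0 satisfy Σ_{X∈𝒳, x∈X} |X|·‖W_X‖ ≤ g for every x ∈ Λ, where |X| is the cardinality of X. Then, setting W := Σ_{X∈𝒳} W_X and N := Σ_{x∈Λ} q_x, one has ‖WΨ‖ ≤ g·‖NΨ‖ for every Ψ ∈ H. -/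
/-!
The commuting projections `q x` have joint spectral projections
`E σ = ∏_{x ∈ σ} q x * ∏_{x ∉ σ} (1 - q x)`, `σ ⊆ Λ`: a resolution of the identity on whose
pieces `N` acts as `|σ|`, and with `P_X = ∏_{x ∈ X} (1 - q x)` among the partial products.
Since `W_X` commutes with `q y` for `y ∉ X` and kills the range of `P_X`, it only connects
configurations `τ, σ` that meet `X` and agree off `X`. Hence `⟪Φ, W_X Ψ⟫` splits into blocks
labelled by `ρ = σ \ X`, on which `N ≥ |ρ| + 1`. Cauchy–Schwarz over the pairs `(X, ρ)` with
weights `‖W_X‖ / (|ρ| + 1)` reduces the claim to `∑_{X ∩ σ ≠ ∅} ‖W_X‖ / (|σ \ X| + 1) ≤ g`,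
which follows by double counting from `1 / (|σ \ X| + 1) ≤ |σ ∩ X| / |σ|`.
-/

open scoped BigOperators

/-- The local ground-state projection `P_X = ∏_{x ∈ X} (1 − q_x)`, defined as a
`noncommProd` over the finite set `X`; the factors pairwise commute since the
projections `q_x` do. -/
noncomputable def groundProjection {H : Type*} [NormedAddCommGroup H]
    [InnerProductSpace ℂ H] [CompleteSpace H] {Λ : Type*}
    (q : Λ → H →L[ℂ] H) (hq_comm : ∀ x y, Commute (q x) (q y))
    (X : Finset Λ) : H →L[ℂ] H :=
  X.noncommProd (fun x => 1 - q x)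
    (fun a _ b _ _ =>
      (Commute.one_left (1 - q b)).sub_left
        ((Commute.one_right (q a)).sub_right (hq_comm a b)))

open Finset

section FinsetSums

theorem Finset.sum_fiberwise_dep {ι κ M : Type*} [Fintype κ] [DecidableEq κ] [AddCommMonoid M]
    (s : Finset ι) (b : ι → κ) (f : κ → ι → M) :
    ∑ k, ∑ i ∈ s with b i = k, f k i = ∑ i ∈ s, f (b i) i := by
  rw [← sum_fiberwise s b]
  exact sum_congr rfl fun k _ => sum_congr rfl fun i hi => by rw [(mem_filter.1 hi).2]

theorem Finset.sum_sum_eq_sum_blocks {ι κ M : Type*} [Fintype ι] [Fintype κ] [DecidableEq κ]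
    [AddCommMonoid M] (P : ι → Prop) [DecidablePred P] (b : ι → κ) {f : ι → ι → M}
    (hf : ∀ i j, ¬(P i ∧ P j ∧ b i = b j) → f i j = 0) :
    ∑ i, ∑ j, f i j = ∑ k, ∑ i with P i ∧ b i = k, ∑ j with P j ∧ b j = k, f i j := by
  have hrow : ∀ i, ∑ j, f i j = if P i then ∑ j with P j ∧ b j = b i, f i j else 0 := by
    intro i
    split_ifs with hi
    · rw [sum_filter]
      refine sum_congr rfl fun j _ => ?_
      split_ifs with hj
      · rfl
      · exact hf i j fun h => hj ⟨h.2.1, h.2.2.symm⟩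
    · exact sum_eq_zero fun j _ => hf i j fun h => hi h.1
  rw [sum_congr rfl fun i _ => hrow i, ← sum_filter]
  simp_rw [← filter_filter]
  exact (sum_fiberwise_dep _ b fun k i => ∑ j ∈ univ.filter P with b j = k, f i j).symm

variable {Λ : Type*} [DecidableEq Λ]

theorem sum_mul_card_inter (𝒳 : Finset (Finset Λ)) (w : Finset Λ → ℝ) (σ : Finset Λ) :
    ∑ X ∈ 𝒳, w X * #(σ ∩ X) = ∑ x ∈ σ, ∑ X ∈ 𝒳 with x ∈ X, w X := by
  simp_rw [← filter_mem_eq_inter, card_filter, Nat.cast_sum, mul_sum, sum_filter]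
  rw [sum_comm]
  simp

theorem sum_div_card_sdiff_add_one_le {𝒳 : Finset (Finset Λ)} {w : Finset Λ → ℝ} {g : ℝ}
    (hw : ∀ X, 0 ≤ w X) (hg₀ : 0 ≤ g) (hg : ∀ x, ∑ X ∈ 𝒳 with x ∈ X, w X ≤ g)
    (σ : Finset Λ) : ∑ X ∈ 𝒳 with (σ ∩ X).Nonempty, w X / (#(σ \ X) + 1) ≤ g := by
  rcases σ.eq_empty_or_nonempty with rfl | hσ
  · simpa using hg₀
  have hσpos : (0 : ℝ) < #σ := by exact_mod_cast hσ.card_pos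
  have hterm : ∀ X, (σ ∩ X).Nonempty → w X / (#(σ \ X) + 1) ≤ w X * #(σ ∩ X) / #σ := by
    intro X hX
    have hsplit : (#(σ ∩ X) : ℝ) + #(σ \ X) = #σ := by
      exact_mod_cast card_inter_add_card_sdiff σ X
    rw [div_le_div_iff₀ (by positivity) hσpos, ← hsplit]
    have hone : (1 : ℝ) ≤ #(σ ∩ X) := by exact_mod_cast hX.card_pos
    nlinarith [mul_nonneg (hw X) (mul_nonneg (sub_nonneg.2 hone) (Nat.cast_nonneg #(σ \ X)))]
  calc ∑ X ∈ 𝒳 with (σ ∩ X).Nonempty, w X / (#(σ \ X) + 1)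
      ≤ ∑ X ∈ 𝒳 with (σ ∩ X).Nonempty, w X * #(σ ∩ X) / #σ :=
        sum_le_sum fun X hX => hterm X (mem_filter.1 hX).2
    _ ≤ ∑ X ∈ 𝒳, w X * #(σ ∩ X) / #σ :=
        sum_le_sum_of_subset_of_nonneg (filter_subset _ _) fun X _ _ => by
          have := hw X; positivity
    _ = (∑ x ∈ σ, ∑ X ∈ 𝒳 with x ∈ X, w X) / #σ := by rw [← sum_div, sum_mul_card_inter]
    _ ≤ (#σ * g) / #σ := by
        gcongr
        exact (sum_le_sum fun x _ => hg x).trans_eq (by simp)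
    _ = g := by field_simp

end FinsetSums

section JointProjection

variable {R : Type*} [Ring R] {Λ : Type*} [DecidableEq Λ] {p : Λ → R}

lemma Commute.ite_one_sub {a b : R} (h : Commute a b) (P Q : Prop) [Decidable P] [Decidable Q] :
    Commute (if P then a else 1 - a) (if Q then b else 1 - b) := by
  have h₁ : Commute (1 - a) b := (Commute.one_left b).sub_left h
  split_ifs
  exacts [h, (Commute.one_right a).sub_right h, h₁, (Commute.one_right _).sub_right h₁]

lemma pairwise_commute_ite_one_sub (hp : ∀ x y, Commute (p x) (p y)) (s : Set Λ)
    (σ : Finset Λ) :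
    s.Pairwise (Function.onFun Commute fun x => if x ∈ σ then p x else 1 - p x) :=
  fun x _ y _ _ => (hp x y).ite_one_sub _ _

def jointProj (hp : ∀ x y, Commute (p x) (p y)) (s σ : Finset Λ) : R :=
  s.noncommProd (fun x => if x ∈ σ then p x else 1 - p x) (pairwise_commute_ite_one_sub hp _ σ)

variable {hp : ∀ x y, Commute (p x) (p y)} {s t σ τ : Finset Λ} {a : Λ}

lemma jointProj_empty (σ : Finset Λ) : jointProj hp ∅ σ = 1 := noncommProd_empty _ _

lemma jointProj_insert (ha : a ∉ s) (σ : Finset Λ) :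
    jointProj hp (insert a s) σ = (if a ∈ σ then p a else 1 - p a) * jointProj hp s σ :=
  noncommProd_insert_of_notMem s a (fun x => if x ∈ σ then p x else 1 - p x) _ ha

lemma jointProj_congr (h : ∀ x ∈ s, x ∈ σ ↔ x ∈ τ) : jointProj hp s σ = jointProj hp s τ :=
  noncommProd_congr rfl (fun x hx => by simp only [h x hx]) _

lemma commute_jointProj {b : R} (hb : ∀ x ∈ s, Commute b (p x)) (σ : Finset Λ) :
    Commute b (jointProj hp s σ) :=
  noncommProd_commute s (fun x => if x ∈ σ then p x else 1 - p x) _ b fun x hx => by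
    split_ifs
    exacts [hb x hx, (Commute.one_right b).sub_right (hb x hx)]

lemma commute_jointProj_jointProj (s σ t τ : Finset Λ) :
    Commute (jointProj hp s σ) (jointProj hp t τ) :=
  commute_jointProj (fun x _ => (commute_jointProj (fun y _ => hp x y) σ).symm) τ

lemma mul_jointProj (hidem : ∀ x, IsIdempotentElem (p x)) (ha : a ∈ s) (σ : Finset Λ) :
    p a * jointProj hp s σ = if a ∈ σ then jointProj hp s σ else 0 := by
  unfold jointProj
  rw [← mul_noncommProd_erase s ha, ← mul_assoc]
  split_ifs
  · rw [(hidem a).eq]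
  · rw [(hidem a).mul_one_sub_self, zero_mul]

lemma jointProj_mul (hidem : ∀ x, IsIdempotentElem (p x)) (ha : a ∈ s) (σ : Finset Λ) :
    jointProj hp s σ * p a = if a ∈ σ then jointProj hp s σ else 0 := by
  rw [← (commute_jointProj (fun x _ => hp a x) σ).eq, mul_jointProj hidem ha]

lemma one_sub_mul_jointProj (hidem : ∀ x, IsIdempotentElem (p x)) (ha : a ∈ s) (σ : Finset Λ) :
    (1 - p a) * jointProj hp s σ = if a ∈ σ then 0 else jointProj hp s σ := by
  rw [sub_mul, one_mul, mul_jointProj hidem ha]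
  split_ifs <;> simp

lemma jointProj_mul_jointProj (hidem : ∀ x, IsIdempotentElem (p x)) (hst : s ⊆ t)
    (τ σ : Finset Λ) :
    jointProj hp s τ * jointProj hp t σ =
      if ∀ x ∈ s, x ∈ τ ↔ x ∈ σ then jointProj hp t σ else 0 := by
  induction s using Finset.induction_on with
  | empty => simp [jointProj_empty]
  | insert a s ha ih =>
    have hat : a ∈ t := hst (mem_insert_self a s)
    rw [jointProj_insert ha, mul_assoc, ih ((subset_insert a s).trans hst)]
    simp only [forall_mem_insert]
    split_ifs <;> simp_all [mul_jointProj hidem hat, one_sub_mul_jointProj hidem hat]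

lemma sum_jointProj (s : Finset Λ) : ∑ σ ∈ s.powerset, jointProj hp s σ = 1 := by
  induction s using Finset.induction_on with
  | empty => simp [jointProj_empty]
  | insert a s ha ih =>
    have hout : ∀ σ ∈ s.powerset, jointProj hp (insert a s) σ = (1 - p a) * jointProj hp s σ :=
      fun σ hσ => by rw [jointProj_insert ha, if_neg fun h => ha (mem_powerset.1 hσ h)]
    have hin : ∀ σ ∈ s.powerset,
        jointProj hp (insert a s) (insert a σ) = p a * jointProj hp s σ := fun σ _ => by
      rw [jointProj_insert ha, if_pos (mem_insert_self a σ)]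
      exact congrArg _ (jointProj_congr fun x hx => by grind)
    rw [sum_powerset_insert ha, sum_congr rfl hout, sum_congr rfl hin, ← mul_sum, ← mul_sum, ih,
      mul_one, mul_one, sub_add_cancel]

lemma isStarProjection_jointProj [StarRing R] (hproj : ∀ x, IsStarProjection (p x))
    (s σ : Finset Λ) : IsStarProjection (jointProj hp s σ) := by
  induction s using Finset.induction_on with
  | empty => simp [jointProj_empty]
  | insert a s ha ih =>
    rw [jointProj_insert ha]
    refine IsStarProjection.mul ?_ ih (commute_jointProj (fun x _ => ?_) σ)
    · split_ifs
      exacts [hproj a, (hproj a).one_sub]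
    · split_ifs
      exacts [hp a x, (Commute.one_left _).sub_left (hp a x)]

variable [Fintype Λ]

lemma jointProj_mul_sum (hidem : ∀ x, IsIdempotentElem (p x)) (σ : Finset Λ) :
    jointProj hp univ σ * ∑ x, p x = #σ • jointProj hp univ σ := by
  simp [mul_sum, jointProj_mul hidem (mem_univ _)]

lemma jointProj_mul_mul_jointProj_eq_zero (hidem : ∀ x, IsIdempotentElem (p x)) {X : Finset Λ}
    {b : R} (hPb : jointProj hp X ∅ * b = 0) (hbP : b * jointProj hp X ∅ = 0)
    (hb : ∀ y ∉ X, Commute b (p y)) {τ σ : Finset Λ}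
    (h : ¬((τ ∩ X).Nonempty ∧ (σ ∩ X).Nonempty ∧ τ \ X = σ \ X)) :
    jointProj hp univ τ * b * jointProj hp univ σ = 0 := by
  have hground : ∀ ρ, ¬(ρ ∩ X).Nonempty →
      jointProj hp X ∅ * jointProj hp univ ρ = jointProj hp univ ρ := fun ρ hρ => by
    rw [jointProj_mul_jointProj hidem (subset_univ X), if_pos]
    exact fun x hx => iff_of_false (notMem_empty x) fun hxρ => hρ ⟨x, mem_inter.2 ⟨hxρ, hx⟩⟩
  by_cases hτ : (τ ∩ X).Nonempty
  swap
  · rw [← hground τ hτ, (commute_jointProj_jointProj _ _ _ _).eq, mul_assoc _ _ b, hPb]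
    simp
  by_cases hσ : (σ ∩ X).Nonempty
  swap
  · rw [← hground σ hσ, ← mul_assoc, mul_assoc _ b, hbP]
    simp
  obtain ⟨y, hyX, hy⟩ : ∃ y ∉ X, ¬(y ∈ τ ↔ y ∈ σ) := by
    by_contra! hc
    exact h ⟨hτ, hσ, ext fun y => by simp only [mem_sdiff]; grind⟩
  -- between the two projections `p y` acts as `1` on one side and as `0` on the other
  have hswap := congr(jointProj hp univ τ * $((hb y hyX).eq) * jointProj hp univ σ)
  simp only [← mul_assoc] at hswap
  rw [mul_assoc (_ * b), mul_jointProj hidem (mem_univ y), jointProj_mul hidem (mem_univ y)]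
    at hswap
  split_ifs at hswap <;> simp_all

end JointProjection

section Resolution

variable {𝕜 H : Type*} [RCLike 𝕜] [NormedAddCommGroup H] [InnerProductSpace 𝕜 H]

local notation "⟪" x ", " y "⟫" => @inner 𝕜 _ _ x y

theorem norm_sum_sq_eq_sum_norm_sq {ι : Type*} {s : Finset ι} {v : ι → H}
    (h : (s : Set ι).Pairwise fun i j => ⟪v i, v j⟫ = 0) :
    ‖∑ i ∈ s, v i‖ ^ 2 = ∑ i ∈ s, ‖v i‖ ^ 2 := by
  have hdiag : ⟪∑ i ∈ s, v i, ∑ j ∈ s, v j⟫ = ∑ i ∈ s, ⟪v i, v i⟫ := by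
    simp_rw [sum_inner, inner_sum]
    exact sum_congr rfl fun i hi =>
      sum_eq_single i (fun j hj hji => h hi hj hji.symm) (absurd hi)
  simp_rw [← inner_self_eq_norm_sq (𝕜 := 𝕜), hdiag, map_sum]

theorem norm_le_of_forall_norm_inner_le {v : H} {C : ℝ} (hC : 0 ≤ C)
    (h : ∀ w, ‖⟪w, v⟫‖ ≤ ‖w‖ * C) : ‖v‖ ≤ C := by
  rcases (norm_nonneg v).eq_or_lt with hv | hv
  · rw [← hv]; exact hC
  · refine le_of_mul_le_mul_left ?_ hv
    rw [← sq, ← inner_self_eq_norm_sq (𝕜 := 𝕜)]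
    exact (RCLike.re_le_norm _).trans (h v)

variable [CompleteSpace H] {ι : Type*} [Fintype ι]

structure IsResolutionOfIdentity (E : ι → H →L[𝕜] H) : Prop where
  isSelfAdjoint : ∀ i, IsSelfAdjoint (E i)
  mul_eq_zero : Pairwise fun i j => E i * E j = 0
  sum_eq_one : ∑ i, E i = 1

namespace IsResolutionOfIdentity

variable {E : ι → H →L[𝕜] H}

theorem sum_apply (hE : IsResolutionOfIdentity E) (x : H) : ∑ i, E i x = x := by
  simpa using congr($(hE.sum_eq_one) x)

theorem inner_apply_eq_inner_mul_apply (hE : IsResolutionOfIdentity E) (i : ι) (A : H →L[𝕜] H)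
    (x y : H) : ⟪E i x, A y⟫ = ⟪x, (E i * A) y⟫ :=
  (hE.isSelfAdjoint i).isSymmetric x (A y)

theorem inner_apply_apply_eq_zero (hE : IsResolutionOfIdentity E) {i j : ι} (hij : i ≠ j)
    (x y : H) : ⟪E i x, E j y⟫ = 0 := by
  rw [hE.inner_apply_eq_inner_mul_apply, hE.mul_eq_zero hij]
  simp

theorem norm_sum_apply_sq (hE : IsResolutionOfIdentity E) (s : Finset ι) (x : H) :
    ‖∑ i ∈ s, E i x‖ ^ 2 = ∑ i ∈ s, ‖E i x‖ ^ 2 :=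
  norm_sum_sq_eq_sum_norm_sq fun _ _ _ _ hij => hE.inner_apply_apply_eq_zero hij x x

theorem norm_sq_eq_sum (hE : IsResolutionOfIdentity E) (x : H) :
    ‖x‖ ^ 2 = ∑ i, ‖E i x‖ ^ 2 := by
  conv_lhs => rw [← hE.sum_apply x]
  exact hE.norm_sum_apply_sq univ x

theorem mul_norm_sum_apply_le (hE : IsResolutionOfIdentity E) {N : H →L[𝕜] H} {c : ι → ℝ}
    (hN : ∀ i, E i * N = (c i : 𝕜) • E i) {s : Finset ι} {m : ℝ} (hm : 0 ≤ m)
    (hc : ∀ i ∈ s, m ≤ c i) (x : H) : m * ‖∑ i ∈ s, E i x‖ ≤ ‖∑ i ∈ s, E i (N x)‖ := by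
  refine (pow_le_pow_iff_left₀ (by positivity) (norm_nonneg _) two_ne_zero).1 ?_
  rw [mul_pow, hE.norm_sum_apply_sq, hE.norm_sum_apply_sq, mul_sum]
  refine sum_le_sum fun i hi => ?_
  rw [← mul_apply_eq_comp, hN, smul_apply, norm_smul, mul_pow, RCLike.norm_ofReal, sq_abs]
  gcongr
  exact hc i hi

variable {κ : Type*} [Fintype κ] [DecidableEq κ] (P : ι → Prop) [DecidablePred P] (b : ι → κ)

theorem inner_eq_sum_blocks (hE : IsResolutionOfIdentity E) {A : H →L[𝕜] H}
    (hA : ∀ i j, ¬(P i ∧ P j ∧ b i = b j) → E i * A * E j = 0) (x y : H) :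
    ⟪x, A y⟫ = ∑ k, ⟪∑ i with P i ∧ b i = k, E i x, A (∑ j with P j ∧ b j = k, E j y)⟫ := by
  conv_lhs => rw [← hE.sum_apply x, ← hE.sum_apply y]
  simp_rw [map_sum, sum_inner, inner_sum]
  refine Finset.sum_sum_eq_sum_blocks P b fun i j h => ?_
  rw [hE.inner_apply_eq_inner_mul_apply, ← mul_apply_eq_comp, hA i j h]
  simp

theorem norm_inner_le_sum_blocks (hE : IsResolutionOfIdentity E) {A : H →L[𝕜] H}
    (hA : ∀ i j, ¬(P i ∧ P j ∧ b i = b j) → E i * A * E j = 0) (x y : H) :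
    ‖⟪x, A y⟫‖ ≤
      ∑ k, ‖A‖ * ‖∑ i with P i ∧ b i = k, E i x‖ * ‖∑ j with P j ∧ b j = k, E j y‖ := by
  rw [hE.inner_eq_sum_blocks P b hA]
  refine (norm_sum_le _ _).trans (sum_le_sum fun k _ => ?_)
  refine (norm_inner_le_norm _ _).trans ?_
  rw [mul_comm ‖A‖, mul_assoc]
  gcongr
  exact A.le_opNorm _

end IsResolutionOfIdentity

end Resolution

section LocalInteractions

variable {𝕜 H : Type*} [RCLike 𝕜] [NormedAddCommGroup H] [InnerProductSpace 𝕜 H]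
  [CompleteSpace H] {Λ : Type*} [Fintype Λ] [DecidableEq Λ]

local notation "⟪" x ", " y "⟫" => @inner 𝕜 _ _ x y

theorem isResolutionOfIdentity_jointProj {q : Λ → H →L[𝕜] H}
    (hq : ∀ x y, Commute (q x) (q y)) (hproj : ∀ x, IsStarProjection (q x)) :
    IsResolutionOfIdentity (jointProj hq univ) where
  isSelfAdjoint σ := (isStarProjection_jointProj hproj univ σ).isSelfAdjoint
  mul_eq_zero τ σ hne := by
    dsimp only
    rw [jointProj_mul_jointProj (fun x => (hproj x).isIdempotentElem) subset_rfl, if_neg]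
    exact fun h => hne (ext fun x => h x (mem_univ x))
  sum_eq_one := by rw [← powerset_univ, sum_jointProj]

namespace IsResolutionOfIdentity

variable {E : Finset Λ → H →L[𝕜] H} {𝒳 : Finset (Finset Λ)} {w : Finset Λ → ℝ} {g : ℝ}

theorem sum_weighted_norm_block_sq_le (hE : IsResolutionOfIdentity E) (hw : ∀ X, 0 ≤ w X)
    (hg₀ : 0 ≤ g) (hg : ∀ x, ∑ X ∈ 𝒳 with x ∈ X, w X ≤ g) (v : H) :
    ∑ X ∈ 𝒳, ∑ ρ, w X / (#ρ + 1) * ‖∑ σ with (σ ∩ X).Nonempty ∧ σ \ X = ρ, E σ v‖ ^ 2 ≤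
      g * ‖v‖ ^ 2 := by
  calc _ = ∑ X ∈ 𝒳, ∑ σ with (σ ∩ X).Nonempty, w X / (#(σ \ X) + 1) * ‖E σ v‖ ^ 2 := by
          refine sum_congr rfl fun X _ => ?_
          simp_rw [hE.norm_sum_apply_sq, mul_sum, ← filter_filter]
          exact sum_fiberwise_dep _ _ fun ρ σ => w X / (#ρ + 1) * ‖E σ v‖ ^ 2
    _ = ∑ σ, (∑ X ∈ 𝒳 with (σ ∩ X).Nonempty, w X / (#(σ \ X) + 1)) * ‖E σ v‖ ^ 2 := by
          simp_rw [sum_filter, sum_mul, ite_mul, zero_mul]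
          exact sum_comm
    _ ≤ ∑ σ, g * ‖E σ v‖ ^ 2 := by
          gcongr with σ
          exact sum_div_card_sdiff_add_one_le hw hg₀ hg σ
    _ = g * ‖v‖ ^ 2 := by rw [← mul_sum, hE.norm_sq_eq_sum]

theorem add_one_mul_norm_block_le (hE : IsResolutionOfIdentity E) {N : H →L[𝕜] H}
    (hN : ∀ σ, E σ * N = (#σ : 𝕜) • E σ) (X ρ : Finset Λ) (v : H) :
    (#ρ + 1) * ‖∑ σ with (σ ∩ X).Nonempty ∧ σ \ X = ρ, E σ v‖ ≤
      ‖∑ σ with (σ ∩ X).Nonempty ∧ σ \ X = ρ, E σ (N v)‖ := by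
  refine hE.mul_norm_sum_apply_le (c := fun σ => #σ) (by simpa using hN) (by positivity)
    (fun σ hσ => ?_) v
  obtain ⟨hσX, rfl⟩ := (mem_filter.1 hσ).2
  have := card_inter_add_card_sdiff σ X
  have := hσX.card_pos
  norm_cast
  omega

theorem norm_inner_sum_le (hE : IsResolutionOfIdentity E) {N : H →L[𝕜] H}
    (hN : ∀ σ, E σ * N = (#σ : 𝕜) • E σ) {W : Finset Λ → H →L[𝕜] H}
    (hW : ∀ X ∈ 𝒳, ∀ τ σ, ¬((τ ∩ X).Nonempty ∧ (σ ∩ X).Nonempty ∧ τ \ X = σ \ X) →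
      E τ * W X * E σ = 0)
    (hg₀ : 0 ≤ g) (hg : ∀ x, ∑ X ∈ 𝒳 with x ∈ X, ‖W X‖ ≤ g) (Φ Ψ : H) :
    ‖⟪Φ, (∑ X ∈ 𝒳, W X) Ψ⟫‖ ≤ g * ‖Φ‖ * ‖N Ψ‖ := by
  set B : Finset Λ → Finset Λ → H → H :=
    fun X ρ v => ∑ σ with (σ ∩ X).Nonempty ∧ σ \ X = ρ, E σ v
  have hsum : ‖⟪Φ, (∑ X ∈ 𝒳, W X) Ψ⟫‖ ≤ ∑ X ∈ 𝒳, ∑ ρ, ‖W X‖ * ‖B X ρ Φ‖ * ‖B X ρ Ψ‖ := by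
    rw [_root_.sum_apply, inner_sum]
    exact (norm_sum_le _ _).trans <| sum_le_sum fun X hX =>
      hE.norm_inner_le_sum_blocks (fun σ => (σ ∩ X).Nonempty) (· \ X) (hW X hX) Φ Ψ
  have hNblock : ∀ X ρ, ‖B X ρ Ψ‖ ≤ ‖B X ρ (N Ψ)‖ / (#ρ + 1) := fun X ρ => by
    rw [le_div_iff₀ (by positivity), mul_comm]
    exact hE.add_one_mul_norm_block_le hN X ρ Ψ
  have hCS : (∑ X ∈ 𝒳, ∑ ρ, ‖W X‖ * ‖B X ρ Φ‖ * ‖B X ρ Ψ‖) ^ 2 ≤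
      (∑ X ∈ 𝒳, ∑ ρ, ‖W X‖ / (#ρ + 1) * ‖B X ρ Φ‖ ^ 2) *
        ∑ X ∈ 𝒳, ∑ ρ, ‖W X‖ / (#ρ + 1) * ‖B X ρ (N Ψ)‖ ^ 2 := by
    rw [← sum_product' (f := fun X ρ => ‖W X‖ * ‖B X ρ Φ‖ * ‖B X ρ Ψ‖),
      ← sum_product' (f := fun X ρ => ‖W X‖ / (#ρ + 1) * ‖B X ρ Φ‖ ^ 2),
      ← sum_product' (f := fun X ρ => ‖W X‖ / (#ρ + 1) * ‖B X ρ (N Ψ)‖ ^ 2)]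
    refine sum_sq_le_sum_mul_sum_of_sq_le_mul _ (fun _ _ => by positivity)
      (fun _ _ => by positivity) fun ⟨X, ρ⟩ _ => ?_
    calc (‖W X‖ * ‖B X ρ Φ‖ * ‖B X ρ Ψ‖) ^ 2
        = (‖W X‖ * ‖B X ρ Φ‖) ^ 2 * ‖B X ρ Ψ‖ ^ 2 := by ring
      _ ≤ (‖W X‖ * ‖B X ρ Φ‖) ^ 2 * (‖B X ρ (N Ψ)‖ / (#ρ + 1)) ^ 2 := by
        gcongr
        exact hNblock X ρ
      _ = _ := by ring
  refine hsum.trans ((pow_le_pow_iff_left₀ (by positivity) (by positivity) two_ne_zero).1 ?_)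
  calc _ ≤ _ := hCS
    _ ≤ (g * ‖Φ‖ ^ 2) * (g * ‖N Ψ‖ ^ 2) :=
        mul_le_mul (hE.sum_weighted_norm_block_sq_le (fun _ => norm_nonneg _) hg₀ hg Φ)
          (hE.sum_weighted_norm_block_sq_le (fun _ => norm_nonneg _) hg₀ hg (N Ψ))
          (sum_nonneg fun X _ => sum_nonneg fun ρ _ => by positivity) (by positivity)
    _ = (g * ‖Φ‖ * ‖N Ψ‖) ^ 2 := by ring

end IsResolutionOfIdentity

end LocalInteractions

lemma groundProjection_eq_jointProj {H : Type*} [NormedAddCommGroup H] [InnerProductSpace ℂ H]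
    [CompleteSpace H] {Λ : Type*} [DecidableEq Λ] (q : Λ → H →L[ℂ] H)
    (hq : ∀ x y, Commute (q x) (q y)) (X : Finset Λ) :
    groundProjection q hq X = jointProj hq X ∅ :=
  noncommProd_congr rfl (fun x _ => by simp) _

theorem relative_bound_of_local_interactions_general
    {H : Type*} [NormedAddCommGroup H] [InnerProductSpace ℂ H] [CompleteSpace H]
    {Λ : Type*} [Fintype Λ] [DecidableEq Λ]
    (q : Λ → H →L[ℂ] H)
    (hq_sa : ∀ x, IsSelfAdjoint (q x))
    (hq_idem : ∀ x, q x * q x = q x)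
    (hq_comm : ∀ x y, Commute (q x) (q y))
    (𝒳 : Finset (Finset Λ))
    (W : Finset Λ → H →L[ℂ] H)
    (hW_comm : ∀ X ∈ 𝒳, ∀ y, y ∉ X → Commute (W X) (q y))
    (hWP : ∀ X ∈ 𝒳, W X * groundProjection q hq_comm X = 0 ∧
      groundProjection q hq_comm X * W X = 0)
    (g : ℝ) (hg₀ : 0 ≤ g)
    (hg : ∀ x : Λ, ∑ X ∈ 𝒳.filter (fun X => x ∈ X), (X.card : ℝ) * ‖W X‖ ≤ g) :
    ∀ Ψ : H, ‖(∑ X ∈ 𝒳, W X) Ψ‖ ≤ g * ‖(∑ x : Λ, q x) Ψ‖ := by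
  intro Ψ
  have hE := isResolutionOfIdentity_jointProj hq_comm fun x => ⟨hq_idem x, hq_sa x⟩
  have hN : ∀ σ, jointProj hq_comm univ σ * ∑ x, q x = (#σ : ℂ) • jointProj hq_comm univ σ :=
    fun σ => by rw [jointProj_mul_sum hq_idem σ, Nat.cast_smul_eq_nsmul]
  have hblock : ∀ X ∈ 𝒳, ∀ τ σ, ¬((τ ∩ X).Nonempty ∧ (σ ∩ X).Nonempty ∧ τ \ X = σ \ X) →
      jointProj hq_comm univ τ * W X * jointProj hq_comm univ σ = 0 := by
    intro X hX τ σ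
    simp only [groundProjection_eq_jointProj] at hWP
    exact jointProj_mul_mul_jointProj_eq_zero hq_idem (hWP X hX).2 (hWP X hX).1 (hW_comm X hX)
  have hg' : ∀ x, ∑ X ∈ 𝒳 with x ∈ X, ‖W X‖ ≤ g := fun x =>
    (sum_le_sum fun X hX => le_mul_of_one_le_left (norm_nonneg _) <| by
      exact_mod_cast card_pos.2 ⟨x, (mem_filter.1 hX).2⟩).trans (hg x)
  exact norm_le_of_forall_norm_inner_le (by positivity) fun Φ =>
    (hE.norm_inner_sum_le hN hblock hg₀ hg' Φ Ψ).trans_eq (by ring)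

/-- Operator-theoretic core of Lemma 5.2: if the local interactions
`W_X` annihilate the local ground-state projections `P_X = ∏_{x∈X}(1 − q_x)` from both
sides, commute with the `q_y` for `y ∉ X`, and are locally bounded by `g`
(`Σ_{X ∋ x} |X|·‖W_X‖ ≤ g` for every `x`), then `‖WΨ‖ ≤ g·‖NΨ‖` where
`W = Σ_X W_X` and `N = Σ_x q_x`. -/
theorem relative_bound_of_local_interactions
    {H : Type*} [NormedAddCommGroup H] [InnerProductSpace ℂ H] [CompleteSpace H]
    {Λ : Type*} [Fintype Λ] [DecidableEq Λ]
    (q : Λ → H →L[ℂ] H)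
    (hq_sa : ∀ x, IsSelfAdjoint (q x))
    (hq_idem : ∀ x, q x * q x = q x)
    (hq_comm : ∀ x y, Commute (q x) (q y))
    (𝒳 : Finset (Finset Λ)) (h𝒳 : ∀ X ∈ 𝒳, X.Nonempty)
    (W : Finset Λ → H →L[ℂ] H)
    (hW_sa : ∀ X ∈ 𝒳, IsSelfAdjoint (W X))
    (hW_comm : ∀ X ∈ 𝒳, ∀ y, y ∉ X → Commute (W X) (q y))
    (hWP : ∀ X ∈ 𝒳, W X * groundProjection q hq_comm X = 0 ∧
      groundProjection q hq_comm X * W X = 0)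
    (g : ℝ) (hg₀ : 0 ≤ g)
    (hg : ∀ x : Λ, ∑ X ∈ 𝒳.filter (fun X => x ∈ X), (X.card : ℝ) * ‖W X‖ ≤ g) :
    ∀ Ψ : H, ‖(∑ X ∈ 𝒳, W X) Ψ‖ ≤ g * ‖(∑ x : Λ, q x) Ψ‖ :=
  relative_bound_of_local_interactions_general q hq_sa hq_idem hq_comm 𝒳 W hW_comm hWP g hg₀ hg
end

section
/- Let n be a nonempty finite type and let A be an invertible n×n complex matrix that is self-adjoint (Aᴴ = A) and antisymmetric (Aᵀ = −A). Let |A| := √(AᴴA) be the positive semidefinite square root of AᴴA (which is invertible since A is invertible), and define the sign matrix S := A·|A|⁻¹. Then S is antisymmetric: Sᵀ = −S. -/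
/-!
Identify `√(AᴴA)` with the continuous-functional-calculus absolute value `|A|`. Transposition
preserves positivity, so by uniqueness of positive square roots `|A|ᵀ = |Aᴴᵀ|`, which for
`Aᴴ = A`, `Aᵀ = -A` is `|-A| = |A|`. As `A` is normal it commutes with `|A|`, hence
`(A|A|⁻¹)ᵀ = |A|⁻¹(-A) = -A|A|⁻¹`.
-/

open Matrix
open scoped ComplexOrder

/-- The positive semidefinite square root of a positive semidefinite matrix, as defined in
Mathlib (December 2024) under the name `Matrix.PosSemidef.sqrt` (since removed). -/
noncomputable def Matrix.PosSemidef.sqrt {𝕜 : Type*} [RCLike 𝕜] {n : Type*} [Fintype n]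
    [DecidableEq n] {A : Matrix n n 𝕜} (hA : A.PosSemidef) : Matrix n n 𝕜 :=
  (hA.1.eigenvectorUnitary : Matrix n n 𝕜) *
    diagonal (((↑) : ℝ → 𝕜) ∘ (√·) ∘ hA.1.eigenvalues) *
    (star hA.1.eigenvectorUnitary : Matrix n n 𝕜)

open scoped MatrixOrder

theorem IsUnit.cfcAbs {A : Type*} [PartialOrder A] [Ring A] [StarRing A] [TopologicalSpace A]
    [StarOrderedRing A] [Algebra ℝ A] [ContinuousFunctionalCalculus ℝ A IsSelfAdjoint]
    [NonnegSpectrumClass ℝ A] [IsSemitopologicalRing A] [T2Space A]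
    {a : A} (ha : IsUnit a) : IsUnit (CFC.abs a) :=
  (CFC.isUnit_sqrt_iff _).mpr (ha.star.mul ha)

namespace Matrix

variable {𝕜 n : Type*} [RCLike 𝕜] [Fintype n] [DecidableEq n]

theorem PosSemidef.sqrt_eq_cfcSqrt {A : Matrix n n 𝕜} (hA : A.PosSemidef) :
    hA.sqrt = CFC.sqrt A := by
  rw [CFC.sqrt_eq_real_sqrt A hA.nonneg, cfcₙ_eq_cfc, hA.1.cfc_eq, IsHermitian.cfc,
    Unitary.conjStarAlgAut_apply]
  rfl

theorem sqrt_conjTranspose_mul_self_eq_cfcAbs (A : Matrix n n 𝕜) :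
    (posSemidef_conjTranspose_mul_self A).sqrt = CFC.abs A :=
  (posSemidef_conjTranspose_mul_self A).sqrt_eq_cfcSqrt

theorem transpose_cfcSqrt {A : Matrix n n 𝕜} (hA : A.PosSemidef) :
    (CFC.sqrt A)ᵀ = CFC.sqrt Aᵀ := by
  refine (CFC.sqrt_unique ?_ (CFC.sqrt_nonneg A).posSemidef.transpose.nonneg).symm
  rw [← transpose_mul, CFC.sqrt_mul_sqrt_self A hA.nonneg]

theorem transpose_cfcAbs (A : Matrix n n 𝕜) : (CFC.abs A)ᵀ = CFC.abs Aᴴᵀ := by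
  rw [CFC.abs, CFC.abs, star_eq_conjTranspose, star_eq_conjTranspose,
    transpose_cfcSqrt (posSemidef_conjTranspose_mul_self A), transpose_mul,
    conjTranspose_transpose_eq_transpose_conjTranspose, conjTranspose_conjTranspose]

theorem commute_nonsing_inv_right {R : Type*} [CommRing R] {A B : Matrix n n R}
    (h : Commute A B) : Commute A B⁻¹ := by
  by_cases hB : IsUnit B
  · simpa only [coe_units_inv, IsUnit.unit_spec] using h.units_inv_right (u := hB.unit)
  · rw [nonsing_inv_eq_ringInverse, Ring.inverse_non_unit B hB]
    exact Commute.zero_right A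

end Matrix

theorem sign_of_selfAdjoint_antisymmetric_is_antisymmetric_general
    {n : Type*} [Fintype n] [DecidableEq n]
    (A : Matrix n n ℂ) (hinv : IsUnit A) (hH : Aᴴ = A) (hT : Aᵀ = -A) :
    IsUnit (Matrix.posSemidef_conjTranspose_mul_self A).sqrt ∧
      (A * ((Matrix.posSemidef_conjTranspose_mul_self A).sqrt)⁻¹)ᵀ =
        -(A * ((Matrix.posSemidef_conjTranspose_mul_self A).sqrt)⁻¹) := by
  have hA : IsSelfAdjoint A := hH
  rw [sqrt_conjTranspose_mul_self_eq_cfcAbs]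
  refine ⟨hinv.cfcAbs, ?_⟩
  rw [transpose_mul, transpose_nonsing_inv, transpose_cfcAbs, hH, hT, CFC.abs_neg, mul_neg,
    ← (commute_nonsing_inv_right (CFC.commute_abs_self A).symm).eq]

/-- Second part of the Lemma in Section 3.3: for an invertible
self-adjoint antisymmetric complex matrix `A`, the positive square root
`|A| = √(AᴴA)` is invertible and the sign matrix `S = A·|A|⁻¹` is antisymmetric. -/
theorem sign_of_selfAdjoint_antisymmetric_is_antisymmetric
    {n : Type*} [Fintype n] [DecidableEq n] [Nonempty n]
    (A : Matrix n n ℂ) (hinv : IsUnit A) (hH : Aᴴ = A) (hT : Aᵀ = -A) :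
    IsUnit (Matrix.posSemidef_conjTranspose_mul_self A).sqrt ∧
      (A * ((Matrix.posSemidef_conjTranspose_mul_self A).sqrt)⁻¹)ᵀ =
        -(A * ((Matrix.posSemidef_conjTranspose_mul_self A).sqrt)⁻¹) :=
  sign_of_selfAdjoint_antisymmetric_is_antisymmetric_general A hinv hH hT
end

section
/- Let n be a nonempty finite type and let T be an n×n complex Hermitian matrix (Tᴴ = T). Set Re T := (T + Tᵀ)/2, Im T := (T − Tᵀ)/(2i), and A := i·fromBlocks (Im T) (Re T) (−(Re T)) (Im T). Then the spectrum of A over ℂ equals σ(T) ∪ (−σ(T)). In particular, if ΔE > 0 and every element λ of σ(T) satisfies |λ| ≥ ΔE, then every element μ of σ(A) satisfies |μ| ≥ ΔE (the matrix A has the same spectral gap at zero energy as T). -/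
/-!
In the basis given by the columns of `S = [[1, 1], [i, -i]]` (passing from Majorana to complex
fermion modes) the Majorana matrix becomes block diagonal: `A S = S · diag(-Tᵀ, T)`. The
spectrum of a block triangular matrix is the union of the spectra of its diagonal blocks, and
`Tᵀ` has the same characteristic polynomial as `T`, so `σ(A) = σ(-Tᵀ) ∪ σ(T) = -σ(T) ∪ σ(T)`.
-/

open Matrix

/-- The entrywise real part `(T + Tᵀ)/2` of a Hermitian matrix `T`. -/
noncomputable def matrixRealPart {n : Type*} [Fintype n] (T : Matrix n n ℂ) :
    Matrix n n ℂ := (2 : ℂ)⁻¹ • (T + Tᵀ)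

/-- The entrywise imaginary part `(T − Tᵀ)/(2i)` of a Hermitian matrix `T`. -/
noncomputable def matrixImagPart {n : Type*} [Fintype n] (T : Matrix n n ℂ) :
    Matrix n n ℂ := (2 * Complex.I)⁻¹ • (T - Tᵀ)

/-- The Majorana one-particle matrix `A = i·[[Im T, Re T], [−Re T, Im T]]`. -/
noncomputable def majoranaMatrix {n : Type*} [Fintype n] (T : Matrix n n ℂ) :
    Matrix (n ⊕ n) (n ⊕ n) ℂ :=
  Complex.I • Matrix.fromBlocks (matrixImagPart T) (matrixRealPart T)
    (-(matrixRealPart T)) (matrixImagPart T)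

namespace Matrix

variable {R : Type*} [CommRing R] {m n : Type*} [Fintype m] [DecidableEq m] [Fintype n]
  [DecidableEq n]

theorem spectrum_transpose (M : Matrix n n R) : spectrum R Mᵀ = spectrum R M := by
  ext r
  simp only [mem_spectrum_iff_not_isUnit_eval_charpoly, charpoly_transpose]

theorem spectrum_fromBlocks_zero₂₁ (A : Matrix m m R) (B : Matrix m n R) (D : Matrix n n R) :
    spectrum R (fromBlocks A B 0 D) = spectrum R A ∪ spectrum R D := by
  ext r
  simp only [Set.mem_union, mem_spectrum_iff_not_isUnit_eval_charpoly,
    charpoly_fromBlocks_zero₂₁, Polynomial.eval_mul, IsUnit.mul_iff, not_and_or]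

end Matrix

theorem spectrum_eq_of_mul_eq_mul {R A : Type*} [CommSemiring R] [Ring A] [Algebra R A]
    {a b s : A} (hs : IsUnit s) (h : a * s = s * b) : spectrum R a = spectrum R b := by
  obtain ⟨u, rfl⟩ := hs
  rw [← spectrum.units_conjugate (a := b) (u := u), ← h, mul_assoc, Units.mul_inv, mul_one]

open Complex

section Majorana

variable {n : Type*} [Fintype n] [DecidableEq n]

noncomputable def majoranaBasisChange : Matrix (n ⊕ n) (n ⊕ n) ℂ :=
  fromBlocks 1 1 (I • 1) (-(I • 1))

theorem isUnit_majoranaBasisChange : IsUnit (majoranaBasisChange (n := n)) := by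
  refine IsUnit.of_mul_eq_one ((2 : ℂ)⁻¹ • fromBlocks 1 (-(I • 1)) 1 (I • 1)) ?_
  rw [majoranaBasisChange, Matrix.mul_smul, fromBlocks_multiply, ← fromBlocks_one]
  simp only [Matrix.mul_one, Matrix.one_mul, Matrix.mul_neg, Matrix.neg_mul, neg_neg,
    smul_mul_smul_comm, I_mul_I, neg_smul, one_smul, add_neg_cancel, neg_add_cancel,
    fromBlocks_smul]
  congr 1 <;> module

theorem majoranaMatrix_mul_majoranaBasisChange (T : Matrix n n ℂ) :
    majoranaMatrix T * majoranaBasisChange = majoranaBasisChange * fromBlocks (-Tᵀ) 0 0 T := by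
  rw [majoranaMatrix, majoranaBasisChange, Matrix.smul_mul, fromBlocks_multiply,
    fromBlocks_multiply, matrixRealPart, matrixImagPart]
  simp only [Matrix.mul_one, Matrix.one_mul, Matrix.mul_zero, Matrix.mul_neg,
    Matrix.neg_mul, Matrix.mul_smul, Matrix.smul_mul, add_zero, zero_add, fromBlocks_smul]
  congr 1 <;> match_scalars <;> field_simp <;> norm_num [I_sq]

theorem spectrum_majoranaMatrix (T : Matrix n n ℂ) :
    spectrum ℂ (majoranaMatrix T) = spectrum ℂ T ∪ -spectrum ℂ T := by
  rw [spectrum_eq_of_mul_eq_mul isUnit_majoranaBasisChange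
      (majoranaMatrix_mul_majoranaBasisChange T), spectrum_fromBlocks_zero₂₁,
    ← spectrum.neg_eq, spectrum_transpose, Set.union_comm]

end Majorana

theorem majoranaMatrix_spectrum_and_gap_general
    {n : Type*} [Fintype n] [DecidableEq n]
    (T : Matrix n n ℂ) :
    spectrum ℂ (majoranaMatrix T) = spectrum ℂ T ∪ (Neg.neg '' spectrum ℂ T) ∧
      ∀ ΔE : ℝ, 0 < ΔE → (∀ lam ∈ spectrum ℂ T, ΔE ≤ ‖lam‖) →
        ∀ μ ∈ spectrum ℂ (majoranaMatrix T), ΔE ≤ ‖μ‖ := by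
  have hspec := spectrum_majoranaMatrix T
  refine ⟨by rwa [Set.image_neg_eq_neg], fun ΔE _ hgap μ hμ => ?_⟩
  rw [hspec] at hμ
  rcases hμ with hμ | hμ
  · exact hgap μ hμ
  · simpa using hgap (-μ) hμ

/-- The Majorana one-particle matrix `A` has spectrum
`σ(T) ∪ (−σ(T))`; in particular a spectral gap `|λ| ≥ ΔE` of `T` at zero energy
gives the same spectral gap of `A` at zero energy (Section 3.2). -/
theorem majoranaMatrix_spectrum_and_gap
    {n : Type*} [Fintype n] [DecidableEq n] [Nonempty n]
    (T : Matrix n n ℂ) (hT : Tᴴ = T) :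
    spectrum ℂ (majoranaMatrix T) = spectrum ℂ T ∪ (Neg.neg '' spectrum ℂ T) ∧
      ∀ ΔE : ℝ, 0 < ΔE → (∀ lam ∈ spectrum ℂ T, ΔE ≤ ‖lam‖) →
        ∀ μ ∈ spectrum ℂ (majoranaMatrix T), ΔE ≤ ‖μ‖ :=
  majoranaMatrix_spectrum_and_gap_general T
end

section
/- Let n be a nonempty finite type, let H be an n×n complex Hermitian matrix, and let B be an arbitrary n×n complex matrix. Let γ > 0 and let w : ℝ → ℂ be an integrable function such that ∫_ℝ w(t)·exp(i t ω) dt = 0 for every real ω with |ω| ≥ γ. Suppose φ and ψ are vectors in ℂⁿ with H·φ = E₀·φ and H·ψ = λ·ψ for real numbers E₀ and λ satisfying |λ − E₀| ≥ γ. Then ⟨ψ, (∫_ℝ w(t)·exp(itH)·B·exp(−itH) dt)·φ⟩ = 0, where exp denotes the matrix exponential and the integral is the Bochner integral (the integrand is integrable since exp(itH) is unitary for Hermitian H). -/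
open Matrix MeasureTheory

attribute [local instance] Matrix.normedAddCommGroup Matrix.normedSpace

/-!
If `H φ = E₀ φ` and `H ψ = λ ψ` with `H` Hermitian, then `e^{-itH} φ = e^{-itE₀} φ` and
`ψ† e^{itH} = e^{itλ} ψ†`, so the matrix element `⟨ψ, e^{itH} B e^{-itH} φ⟩` is
`e^{it(λ - E₀)} ⟨ψ, B φ⟩`. Pulling the matrix element inside the integral turns
`⟨ψ, ℛ(B) φ⟩` into `⟨ψ, B φ⟩` times the Fourier transform of `w` at `λ - E₀`, which vanishes
because `|λ - E₀| ≥ γ`. When the integrand is not integrable the Bochner integral is `0`.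
-/

namespace Matrix

variable {n : Type*} [Fintype n]

theorem pow_mulVec_of_mulVec_eq_smul {R : Type*} [CommSemiring R] [DecidableEq n]
    {M : Matrix n n R} {v : n → R} {c : R} (h : M *ᵥ v = c • v) (k : ℕ) :
    (M ^ k) *ᵥ v = c ^ k • v := by
  induction k with
  | zero => simp
  | succ k ih => rw [pow_succ, ← mulVec_mulVec, h, mulVec_smul, ih, smul_smul, pow_succ']

section Exponential

open NormedSpace

variable {𝕂 : Type*} [RCLike 𝕂] [DecidableEq n] {M : Matrix n n 𝕂} {v : n → 𝕂} {c : 𝕂}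

attribute [local instance] Matrix.linftyOpNormedAddCommGroup Matrix.linftyOpNormedRing
  Matrix.linftyOpNormedAlgebra in
theorem exp_mulVec_of_mulVec_eq_smul (h : M *ᵥ v = c • v) : exp M *ᵥ v = exp c • v := by
  have hM := (exp_series_hasSum_exp' (𝕂 := 𝕂) M).map (mulVec.addMonoidHomLeft v)
    (continuous_id.matrix_mulVec continuous_const)
  have hc := (exp_series_hasSum_exp' (𝕂 := 𝕂) c).smul_const v
  refine hM.unique (hc.congr_fun fun k ↦ ?_)
  simp [mulVec.addMonoidHomLeft, smul_mulVec, pow_mulVec_of_mulVec_eq_smul h, smul_smul]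

theorem vecMul_exp_of_vecMul_eq_smul (h : v ᵥ* M = c • v) : v ᵥ* exp M = exp c • v := by
  rw [← mulVec_transpose, ← exp_transpose]
  exact exp_mulVec_of_mulVec_eq_smul (by rwa [mulVec_transpose])

end Exponential

theorem dotProduct_mul_mul_mulVec_of_eigen {R : Type*} [CommSemiring R] {u v : n → R}
    {U B V : Matrix n n R} {a b : R} (hu : u ᵥ* U = a • u) (hv : V *ᵥ v = b • v) :
    u ⬝ᵥ (U * B * V) *ᵥ v = a * b * (u ⬝ᵥ B *ᵥ v) := by
  rw [← mulVec_mulVec, hv, ← mulVec_mulVec, dotProduct_mulVec, hu, mulVec_smul,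
    smul_dotProduct, dotProduct_smul, smul_eq_mul, smul_eq_mul, mul_assoc]

theorem IsHermitian.star_vecMul_of_mulVec_eq_smul {R : Type*} [CommSemiring R] [StarRing R]
    {H : Matrix n n R} (hH : H.IsHermitian) {ψ : n → R} {c : R} (h : H *ᵥ ψ = c • ψ) :
    star ψ ᵥ* H = star c • star ψ := by
  rw [← hH.eq, ← star_mulVec, h, star_smul]

theorem IsHermitian.dotProduct_exp_mul_mul_exp_mulVec [DecidableEq n]
    {H : Matrix n n ℂ} (hH : H.IsHermitian) (B : Matrix n n ℂ) {φ ψ : n → ℂ}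
    {E₀ lam : ℝ} (hφ : H *ᵥ φ = (E₀ : ℂ) • φ) (hψ : H *ᵥ ψ = (lam : ℂ) • ψ) (s : ℂ) :
    star ψ ⬝ᵥ (NormedSpace.exp (s • H) * B * NormedSpace.exp ((-s) • H)) *ᵥ φ
      = Complex.exp (s * (lam - E₀ : ℝ)) * (star ψ ⬝ᵥ B *ᵥ φ) := by
  have hleft : star ψ ᵥ* (s • H) = (s * lam) • star ψ := by
    rw [vecMul_smul, hH.star_vecMul_of_mulVec_eq_smul hψ, Complex.star_def, Complex.conj_ofReal,
      smul_smul]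
  have hright : ((-s) • H) *ᵥ φ = (-s * E₀) • φ := by
    rw [smul_mulVec, hφ, smul_smul]
  rw [dotProduct_mul_mul_mulVec_of_eigen (vecMul_exp_of_vecMul_eq_smul hleft)
    (exp_mulVec_of_mulVec_eq_smul hright), ← Complex.exp_eq_exp_ℂ, ← Complex.exp_add]
  push_cast
  ring_nf

variable {m 𝕂 : Type*} [Fintype m] [RCLike 𝕂]

noncomputable def dotProductMulVecCLM (u : m → 𝕂) (v : n → 𝕂) : Matrix m n 𝕂 →L[𝕂] 𝕂 :=
  LinearMap.toContinuousLinearMap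
    { toFun := fun M ↦ u ⬝ᵥ M *ᵥ v
      map_add' := fun M N ↦ by rw [add_mulVec, dotProduct_add]
      map_smul' := fun c M ↦ by rw [smul_mulVec, dotProduct_smul, RingHom.id_apply] }

end Matrix

theorem quasiAdiabatic_filter_vanishing_matrix_element_general
    {n : Type*} [Fintype n] [DecidableEq n]
    (Hm : Matrix n n ℂ) (hH : Hmᴴ = Hm) (B : Matrix n n ℂ)
    (γ : ℝ)
    (w : ℝ → ℂ)
    (hFourier : ∀ ω : ℝ, γ ≤ |ω| →
      (∫ t : ℝ, w t * Complex.exp (Complex.I * t * ω)) = 0)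
    (φ ψ : n → ℂ) (E₀ lam : ℝ)
    (hφ : Hm.mulVec φ = (E₀ : ℂ) • φ) (hψ : Hm.mulVec ψ = (lam : ℂ) • ψ)
    (hgap : γ ≤ |lam - E₀|) :
    dotProduct (star ψ)
      ((∫ t : ℝ, w t • (NormedSpace.exp ((Complex.I * t) • Hm) * B *
          NormedSpace.exp ((-(Complex.I * t)) • Hm))).mulVec φ) = 0 := by
  set f : ℝ → Matrix n n ℂ := fun t ↦ w t • (NormedSpace.exp ((Complex.I * t) • Hm) * B *
    NormedSpace.exp ((-(Complex.I * t)) • Hm))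
  -- not found by instance search through the local norm instance on matrices
  let : ContinuousENorm (Matrix n n ℂ) := SeminormedAddGroup.toContinuousENorm
  by_cases hf : Integrable f
  · calc star ψ ⬝ᵥ (∫ t, f t) *ᵥ φ = ∫ t, star ψ ⬝ᵥ f t *ᵥ φ :=
          ((dotProductMulVecCLM (star ψ) φ).integral_comp_comm hf).symm
      _ = ∫ t : ℝ, w t * Complex.exp (Complex.I * t * (lam - E₀ : ℝ)) * (star ψ ⬝ᵥ B *ᵥ φ) := by
          congr 1 with t
          rw [smul_mulVec, dotProduct_smul, smul_eq_mul,
            IsHermitian.dotProduct_exp_mul_mul_exp_mulVec hH B hφ hψ, ← mul_assoc]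
      _ = 0 := by rw [integral_mul_const, hFourier _ hgap, zero_mul]
  · rw [integral_undef hf, zero_mulVec, dotProduct_zero]

/-- Spectral-filtering mechanism (localGScondition) of Section 4:
the quasi-adiabatic operator `ℛ(B) = ∫ w(t) e^{itH} B e^{−itH} dt`, built from a
weight whose Fourier transform vanishes outside `(−γ, γ)`, has vanishing matrix
elements between eigenvectors of `H` whose eigenvalues differ by at least `γ`. -/
theorem quasiAdiabatic_filter_vanishing_matrix_element
    {n : Type*} [Fintype n] [DecidableEq n] [Nonempty n]
    (Hm : Matrix n n ℂ) (hH : Hmᴴ = Hm) (B : Matrix n n ℂ)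
    (γ : ℝ) (hγ : 0 < γ)
    (w : ℝ → ℂ) (hw : MeasureTheory.Integrable w)
    (hFourier : ∀ ω : ℝ, γ ≤ |ω| →
      (∫ t : ℝ, w t * Complex.exp (Complex.I * t * ω)) = 0)
    (φ ψ : n → ℂ) (E₀ lam : ℝ)
    (hφ : Hm.mulVec φ = (E₀ : ℂ) • φ) (hψ : Hm.mulVec ψ = (lam : ℂ) • ψ)
    (hgap : γ ≤ |lam - E₀|) :
    dotProduct (star ψ)
      ((∫ t : ℝ, w t • (NormedSpace.exp ((Complex.I * t) • Hm) * B *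
          NormedSpace.exp ((-(Complex.I * t)) • Hm))).mulVec φ) = 0 :=
  quasiAdiabatic_filter_vanishing_matrix_element_general Hm hH B γ w hFourier φ ψ E₀ lam hφ hψ hgap
end
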